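/- For a multipartition Λ = (λ_χ)_{χ∈Γ^∨} of n, define K_Λ(q) := ∏_{i=1}^n(1-q^i) / ∏_{χ∈Γ^∨}∏_{u∈λ_χ}(1-q^{h_{λ_χ}(u)}). Then K_Λ(q) is a polynomial in q with K_Λ(1) = d_Λ = n!/∏_χ∏_{u∈λ_χ} h_{λ_χ}(u). -/

import Mathlib

/-!
Dividing numerator and denominator by `(1 - q) ^ n` turns `K_Λ` into a quotient of products of
`q`-integers `[m]_q = ∏_{1 < d ∣ m} Φ_d(q)`, so `K_Λ` is a polynomial as soon as, for every
`d > 1`, at most `n / d` of the hook lengths of `Λ` are divisible by `d`; its value at `1` is then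
`∏ [i]_1 / ∏ [h]_1 = n! / ∏ h`.

The hook count is read off the `d`-abacus of the first-column hook lengths `β_i` of each `λ_χ`:
the hooks of row `i` are the differences `β_i - t` with `t < β_i` a gap, and those divisible by `d`
pair `β_i` with a gap above it on its runner. Sliding all beads up to the top of their runners moves
every bead `b` by `d` times the number of such gaps, and the slid beads occupy distinct positions,
so `d · #{h : d ∣ h} ≤ ∑ b - ∑ slid b ≤ ∑ β_i - (0 + 1 + ⋯ + (r - 1)) = |λ|`.
-/

open Finset

def hookLength (μ : YoungDiagram) (c : ℕ × ℕ) : ℕ :=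
  (μ.rowLen c.1 - c.2) + (μ.colLen c.2 - c.1) - 1

lemma Finset.sum_range_card_le_sum_nat (S : Finset ℕ) : ∑ k ∈ range #S, k ≤ ∑ s ∈ S, s := by
  have h := Finset.sum_range_le_sum (s := S.map Nat.castEmbedding) (c := 0)
    (fun x hx => by obtain ⟨y, -, rfl⟩ := mem_map.mp hx; simp)
  zify
  simpa using h

section Abacus

variable (B : Finset ℕ) (d : ℕ)

-- `B` is the set of beads of the `d`-abacus, whose runners are the residue classes mod `d`.
def beadsAbove (b : ℕ) : ℕ := #{s ∈ range b | s ≡ b [MOD d] ∧ s ∈ B}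

def gapsAbove (b : ℕ) : ℕ := #{s ∈ range b | s ≡ b [MOD d] ∧ s ∉ B}

def slideUp (b : ℕ) : ℕ := b % d + d * beadsAbove B d b

variable {B d}

lemma gapsAbove_add_beadsAbove (hd : 0 < d) (b : ℕ) :
    gapsAbove B d b + beadsAbove B d b = b / d := by
  rw [gapsAbove, beadsAbove, ← filter_filter, ← filter_filter, add_comm,
    card_filter_add_card_filter_not, ← Nat.count_eq_card_filter_range,
    Nat.count_modEq_card _ hd]
  simp

lemma mul_gapsAbove_add_slideUp (hd : 0 < d) (b : ℕ) :
    d * gapsAbove B d b + slideUp B d b = b := by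
  have h := congrArg (d * ·) (gapsAbove_add_beadsAbove (B := B) hd b)
  simp only [mul_add] at h
  have := Nat.mod_add_div b d
  rw [slideUp]
  omega

lemma beadsAbove_lt_beadsAbove {b b' : ℕ} (hb : b ∈ B) (hlt : b < b') (hmod : b ≡ b' [MOD d]) :
    beadsAbove B d b < beadsAbove B d b' := by
  apply card_lt_card
  refine (ssubset_iff_of_subset fun s hs => ?_).mpr ⟨b, ?_, fun h => ?_⟩
  · simp only [mem_filter, mem_range] at hs ⊢
    exact ⟨hs.1.trans hlt, hs.2.1.trans hmod, hs.2.2⟩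
  · simp only [mem_filter, mem_range]
    exact ⟨hlt, hmod, hb⟩
  · simp at h

lemma slideUp_injOn (hd : 0 < d) : Set.InjOn (slideUp B d) B := by
  intro b hb b' hb' h
  have hmod : b ≡ b' [MOD d] := by
    show b % d = b' % d
    simpa [slideUp, Nat.add_mul_mod_self_left, Nat.mod_mod] using congrArg (· % d) h
  have hbeads : beadsAbove B d b = beadsAbove B d b' := by
    rw [slideUp, slideUp, hmod] at h
    exact Nat.eq_of_mul_eq_mul_left hd (Nat.add_left_cancel h)
  by_contra hne
  rcases Nat.lt_or_gt_of_ne hne with hlt | hlt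
  · exact (beadsAbove_lt_beadsAbove hb hlt hmod).ne hbeads
  · exact (beadsAbove_lt_beadsAbove hb' hlt hmod.symm).ne' hbeads

theorem mul_sum_gapsAbove_add_le_sum (hd : 0 < d) :
    d * ∑ b ∈ B, gapsAbove B d b + ∑ k ∈ range #B, k ≤ ∑ b ∈ B, b := by
  have hslide : ∑ k ∈ range #B, k ≤ ∑ b ∈ B, slideUp B d b := by
    calc ∑ k ∈ range #B, k = ∑ k ∈ range #(B.image (slideUp B d)), k := by
          rw [card_image_of_injOn (slideUp_injOn hd)]
      _ ≤ ∑ s ∈ B.image (slideUp B d), s := sum_range_card_le_sum_nat _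
      _ = ∑ b ∈ B, slideUp B d b := sum_image (slideUp_injOn hd)
  calc d * ∑ b ∈ B, gapsAbove B d b + ∑ k ∈ range #B, k
      ≤ d * ∑ b ∈ B, gapsAbove B d b + ∑ b ∈ B, slideUp B d b := by gcongr
    _ = ∑ b ∈ B, b := by
      rw [mul_sum, ← sum_add_distrib]
      exact sum_congr rfl fun b _ => mul_gapsAbove_add_slideUp hd b

end Abacus

namespace YoungDiagram

variable (μ : YoungDiagram)

lemma hookLength_pos {c : ℕ × ℕ} (hc : c ∈ μ) : 0 < hookLength μ c := by
  have h1 := mem_iff_lt_rowLen.mp hc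
  have h2 := mem_iff_lt_colLen.mp hc
  simp only [hookLength]
  omega

-- The beads of `μ`; the gaps of this abacus are the `gapPosition j`.
def betaSet : Finset ℕ := (range (μ.colLen 0)).image fun i => hookLength μ (i, 0)

def gapPosition (j : ℕ) : ℕ := j + (μ.colLen 0 - μ.colLen j)

lemma hookLength_add_gapPosition {i j : ℕ} (h : (i, j) ∈ μ) :
    hookLength μ (i, j) + μ.gapPosition j = hookLength μ (i, 0) := by
  have h1 := mem_iff_lt_rowLen.mp h
  have h2 := mem_iff_lt_colLen.mp h
  have h3 := μ.colLen_anti 0 j j.zero_le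
  simp only [hookLength, gapPosition]
  omega

lemma gapPosition_strictMono : StrictMono μ.gapPosition := by
  intro j j' hj
  have := μ.colLen_anti j j' hj.le
  have := μ.colLen_anti 0 j j.zero_le
  simp only [gapPosition]
  omega

lemma gapPosition_notMem_betaSet (j : ℕ) : μ.gapPosition j ∉ μ.betaSet := by
  simp only [betaSet, mem_image, mem_range, not_exists, not_and]
  intro i hi heq
  have hrow : 0 < μ.rowLen i := mem_iff_lt_rowLen.mp (mem_iff_lt_colLen.mpr hi)
  have hcol := μ.colLen_anti 0 j j.zero_le
  by_cases hj : j < μ.rowLen i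
  · have := mem_iff_lt_colLen.mp (mem_iff_lt_rowLen.mpr hj)
    simp only [hookLength, gapPosition] at heq
    omega
  · have : μ.colLen j ≤ i := not_lt.mp fun h => hj (mem_iff_lt_rowLen.mp (mem_iff_lt_colLen.mpr h))
    simp only [hookLength, gapPosition] at heq
    omega

lemma hookLength_zero_strictAntiOn :
    StrictAntiOn (fun i => hookLength μ (i, 0)) (Set.Iio (μ.colLen 0)) := by
  intro i _ i' (hi' : i' < μ.colLen 0) hlt
  have := μ.rowLen_anti i i' hlt.le
  have : 0 < μ.rowLen i' := mem_iff_lt_rowLen.mp (mem_iff_lt_colLen.mpr hi')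
  simp only [hookLength]
  omega

lemma hookLength_zero_injOn : Set.InjOn (fun i => hookLength μ (i, 0)) (range (μ.colLen 0)) := by
  rw [coe_range]
  exact μ.hookLength_zero_strictAntiOn.injOn

lemma card_betaSet : #μ.betaSet = μ.colLen 0 := by
  rw [betaSet, card_image_of_injOn μ.hookLength_zero_injOn, card_range]

lemma card_eq_sum_rowLen : μ.card = ∑ i ∈ range (μ.colLen 0), μ.rowLen i := by
  rw [YoungDiagram.card, card_eq_sum_card_fiberwise (f := Prod.fst) fun c hc => mem_range.mpr
    ((mem_iff_lt_colLen.mp ((mem_cells c).mp hc)).trans_le (μ.colLen_anti 0 _ c.2.zero_le))]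
  exact sum_congr rfl fun i _ => (μ.rowLen_eq_card).symm

lemma sum_betaSet : ∑ b ∈ μ.betaSet, b = μ.card + ∑ k ∈ range (μ.colLen 0), k := by
  rw [betaSet, sum_image μ.hookLength_zero_injOn, card_eq_sum_rowLen,
    ← sum_range_reflect (fun k => k), ← sum_add_distrib]
  refine sum_congr rfl fun i hi => ?_
  have hi := mem_range.mp hi
  have : 0 < μ.rowLen i := mem_iff_lt_rowLen.mp (mem_iff_lt_colLen.mpr hi)
  simp only [hookLength]
  omega

variable {d : ℕ}

lemma card_row_hookLength_dvd_le (i : ℕ) :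
    #{c ∈ μ.row i | d ∣ hookLength μ c} ≤ gapsAbove μ.betaSet d (hookLength μ (i, 0)) := by
  refine card_le_card_of_injOn (fun c => μ.gapPosition c.2) (fun c hc => ?_) ?_
  · obtain ⟨⟨hcμ, rfl⟩, hdvd⟩ := by simpa [row] using hc
    have hsum := μ.hookLength_add_gapPosition hcμ
    simp only [mem_coe, mem_filter, mem_range]
    refine ⟨by linarith [μ.hookLength_pos hcμ], ?_, μ.gapPosition_notMem_betaSet _⟩
    exact (Nat.modEq_iff_dvd' (by omega)).mpr (by rwa [← hsum, Nat.add_sub_cancel_right])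
  · intro c hc c' hc' h
    simp only [mem_coe, mem_filter, row] at hc hc'
    exact Prod.ext (hc.1.2.trans hc'.1.2.symm) (μ.gapPosition_strictMono.injective h)

theorem mul_card_hookLength_dvd_le (hd : 0 < d) :
    d * #{c ∈ μ.cells | d ∣ hookLength μ c} ≤ μ.card := by
  have hrows : #{c ∈ μ.cells | d ∣ hookLength μ c}
      ≤ ∑ b ∈ μ.betaSet, gapsAbove μ.betaSet d b := by
    calc #{c ∈ μ.cells | d ∣ hookLength μ c}
        = ∑ i ∈ range (μ.colLen 0), #{c ∈ μ.row i | d ∣ hookLength μ c} := by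
          rw [card_eq_sum_card_fiberwise (f := Prod.fst) fun c hc => ?_]
          · exact sum_congr rfl fun i _ => by rw [filter_comm]; rfl
          · have hcμ := (mem_cells c).mp (mem_filter.mp hc).1
            exact mem_range.mpr
              ((mem_iff_lt_colLen.mp hcμ).trans_le (μ.colLen_anti 0 _ c.2.zero_le))
      _ ≤ ∑ i ∈ range (μ.colLen 0), gapsAbove μ.betaSet d (hookLength μ (i, 0)) :=
          sum_le_sum fun i _ => μ.card_row_hookLength_dvd_le i
      _ = ∑ b ∈ μ.betaSet, gapsAbove μ.betaSet d b := (sum_image μ.hookLength_zero_injOn).symm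
  have habacus := mul_sum_gapsAbove_add_le_sum (B := μ.betaSet) hd
  rw [card_betaSet, sum_betaSet] at habacus
  have := Nat.mul_le_mul_left d hrows
  omega

end YoungDiagram

section QInteger

open Polynomial

variable {R : Type*} [CommRing R]

lemma prod_geom_sum_eq_prod_cyclotomic_pow {ι : Type*} (s : Finset ι) (f : ι → ℕ) {N : ℕ}
    (hf : ∀ i ∈ s, 0 < f i ∧ f i ≤ N) :
    ∏ i ∈ s, ∑ k ∈ range (f i), (X : R[X]) ^ k
      = ∏ d ∈ Ioc 1 N, cyclotomic d R ^ #{i ∈ s | d ∣ f i} := by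
  have hdiv : ∀ i ∈ s, (f i).divisors.erase 1 = {d ∈ Ioc 1 N | d ∣ f i} := fun i hi => by
    ext d
    have := hf i hi
    simp only [mem_erase, Nat.mem_divisors, mem_filter, mem_Ioc]
    constructor
    · rintro ⟨hd1, hdvd, -⟩
      have := Nat.le_of_dvd this.1 hdvd
      have : d ≠ 0 := by rintro rfl; simp at hdvd; omega
      omega
    · rintro ⟨⟨hd1, -⟩, hdvd⟩
      exact ⟨by omega, hdvd, by omega⟩
  calc ∏ i ∈ s, ∑ k ∈ range (f i), (X : R[X]) ^ k
      = ∏ i ∈ s, ∏ d ∈ Ioc 1 N, if d ∣ f i then cyclotomic d R else 1 := by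
        refine prod_congr rfl fun i hi => ?_
        rw [← prod_cyclotomic_eq_geom_sum (hf i hi).1, hdiv i hi, prod_filter]
    _ = ∏ d ∈ Ioc 1 N, cyclotomic d R ^ #{i ∈ s | d ∣ f i} := by
        rw [prod_comm]
        exact prod_congr rfl fun d _ => by rw [← prod_filter, prod_const]

lemma prod_geom_sum_dvd_prod_geom_sum {ι κ : Type*} {s : Finset ι} {t : Finset κ}
    {f : ι → ℕ} {g : κ → ℕ} (hf : ∀ i ∈ s, 0 < f i) (hg : ∀ j ∈ t, 0 < g j)
    (hcount : ∀ d, 1 < d → #{i ∈ s | d ∣ f i} ≤ #{j ∈ t | d ∣ g j}) :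
    ∏ i ∈ s, ∑ k ∈ range (f i), (X : R[X]) ^ k ∣ ∏ j ∈ t, ∑ k ∈ range (g j), (X : R[X]) ^ k := by
  set N := s.sup f + t.sup g
  rw [prod_geom_sum_eq_prod_cyclotomic_pow s f (N := N) fun i hi =>
      ⟨hf i hi, (le_sup hi).trans (Nat.le_add_right _ _)⟩,
    prod_geom_sum_eq_prod_cyclotomic_pow t g (N := N) fun j hj =>
      ⟨hg j hj, (le_sup hj).trans (Nat.le_add_left _ _)⟩]
  exact prod_dvd_prod_of_dvd _ _ fun d hd => pow_dvd_pow _ (hcount d (mem_Ioc.mp hd).1)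

lemma prod_one_sub_X_pow {ι : Type*} (s : Finset ι) (f : ι → ℕ) :
    ∏ i ∈ s, (1 - (X : R[X]) ^ f i) = (1 - X) ^ #s * ∏ i ∈ s, ∑ k ∈ range (f i), X ^ k := by
  simp_rw [← mul_neg_geom_sum, prod_mul_distrib, prod_const]

end QInteger

lemma mul_card_sigma_hookLength_dvd_le {Γ : Type*} (s : Finset Γ) (Λ : Γ → YoungDiagram)
    {d : ℕ} (hd : 0 < d) :
    d * #{x ∈ s.sigma fun χ => (Λ χ).cells | d ∣ hookLength (Λ x.1) x.2}
      ≤ ∑ χ ∈ s, (Λ χ).card := by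
  rw [card_filter, sum_sigma, mul_sum]
  refine sum_le_sum fun χ _ => ?_
  rw [← card_filter]
  exact (Λ χ).mul_card_hookLength_dvd_le hd

open Polynomial in
/-- For a multipartition `Λ = (λ_χ)` of `n`, the rational function
`K_Λ(q) = ∏_{i=1}^n (1-q^i) / ∏_χ ∏_{u∈λ_χ} (1-q^{h(u)})` is a polynomial, whose value
at `q = 1` is `d_Λ = n!/∏_χ∏_{u∈λ_χ} h(u)` (stated multiplicatively). -/
theorem stmt14 (Γ : Type) [Fintype Γ] (n : ℕ) (Λ : Γ → YoungDiagram)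
    (hΛ : ∑ χ, (Λ χ).card = n) :
    ∃ P : Polynomial ℚ,
      (∏ i ∈ Finset.range n, (1 - Polynomial.X ^ (i + 1))) =
        P * ∏ χ, ∏ c ∈ (Λ χ).cells, (1 - Polynomial.X ^ hookLength (Λ χ) c) ∧
      P.eval 1 * ∏ χ, ∏ c ∈ (Λ χ).cells, (hookLength (Λ χ) c : ℚ) =
        (Nat.factorial n : ℚ) := by
  have hcount : ∀ d, 1 < d →
      #{x ∈ univ.sigma fun χ => (Λ χ).cells | d ∣ hookLength (Λ x.1) x.2}
        ≤ #{i ∈ range n | d ∣ i + 1} := fun d hd => by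
    rw [Nat.card_multiples, Nat.le_div_iff_mul_le (by omega), mul_comm, ← hΛ]
    exact mul_card_sigma_hookLength_dvd_le univ Λ (by omega)
  obtain ⟨P, hP⟩ := prod_geom_sum_dvd_prod_geom_sum (R := ℚ)
    (fun x hx => (Λ x.1).hookLength_pos ((YoungDiagram.mem_cells _).mp (mem_sigma.mp hx).2))
    (fun i _ => i.succ_pos) hcount
  simp only [prod_sigma] at hP
  refine ⟨P, ?_, ?_⟩
  · have hden := prod_one_sub_X_pow (R := ℚ) (univ.sigma fun χ => (Λ χ).cells)
      fun x => hookLength (Λ x.1) x.2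
    rw [card_sigma, hΛ] at hden
    simp only [prod_sigma] at hden
    rw [prod_one_sub_X_pow, card_range, hden, hP]
    ring
  · have hP1 := congrArg (eval 1) hP
    simp only [eval_prod, eval_mul, eval_finsetSum, eval_pow, eval_X, one_pow, sum_const,
      card_range, nsmul_eq_mul, mul_one] at hP1
    rw [← prod_range_add_one_eq_factorial, Nat.cast_prod, hP1]
    ring
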